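/- Let f₁, f₂ : X → ℝ be functions taking values in a bounded set Ω, let ζ : ℝ → ℝ be continuously differentiable with bounded derivative, and set θ_i = ζ ∘ f_i. Suppose the conditional densities π_{f_i}(y|x) belong to a one-parameter canonical exponential family with canonical parameter θ_i(x), whose log-partition function J is C² with J'' bounded on ζ(Ω). Then there exists a constant C(Ω) such that for the joint densities π_{f_i}(x,y) = π_{f_i}(y|x)g(x), KL(π_{f₁}; π_{f₂}) ≤ C(Ω)·‖f₁ − f₂‖_∞². -/

import Mathlib

open MeasureTheory Real Set Topology

/-! For a canonical exponential family `π_θ = h exp (θ κ - J θ)`, the divergence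
`KL(π_θ₁ ‖ π_θ₂) = (θ₁ - θ₂) E_θ₁[κ] - (J θ₁ - J θ₂)` is nonnegative (Gibbs) and vanishes at
`θ₂ = θ₁`, so its derivative in `θ₂` vanishes there: `E_θ₁[κ] = J'(θ₁)`. The divergence is
therefore the Taylor remainder `J θ₂ - J θ₁ - (θ₂ - θ₁) J'(θ₁) ≤ sup J'' / 2 · (θ₂ - θ₁)²`.
With `θᵢ = ζ (fᵢ x)` and `ζ` Lipschitz this is at most `C ‖f₁ - f₂‖_∞²` for every `x`, and
integrating against the probability measure `ν` keeps the bound. -/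

lemma Convex.sub_sub_mul_deriv_le_of_deriv_deriv_le {J : ℝ → ℝ} {K : Set ℝ} {L x y : ℝ}
    (hK : Convex ℝ K) (hJ : ∀ t ∈ K, ContDiffAt ℝ 2 J t)
    (hL : ∀ t ∈ K, deriv (deriv J) t ≤ L) (hx : x ∈ K) (hy : y ∈ K) :
    J y - J x - (y - x) * deriv J x ≤ L / 2 * (y - x) ^ 2 := by
  rcases eq_or_ne x y with rfl | hxy
  · simp
  have hsub : uIcc x y ⊆ K := hK.ordConnected.uIcc_subset hx hy
  obtain ⟨t, ht, hrem⟩ := taylor_mean_remainder_lagrange_iteratedDeriv (n := 1) hxy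
    fun t ht => (hJ t (hsub ht)).contDiffWithinAt
  have hderiv : derivWithin J (uIcc x y) x = deriv J x :=
    ((hJ x hx).differentiableAt (by norm_num)).derivWithin
      (uniqueDiffOn_uIcc hxy x left_mem_uIcc)
  simp only [taylorWithinEval_succ, taylor_within_zero_eval, iteratedDeriv_succ,
    iteratedDeriv_zero] at hrem
  norm_num [iteratedDerivWithin_one, hderiv] at hrem
  calc J y - J x - (y - x) * deriv J x = deriv (deriv J) t / 2 * (y - x) ^ 2 := by linarith
    _ ≤ L / 2 * (y - x) ^ 2 := by
      gcongr
      exact hL t (hsub (uIoo_subset_uIcc_self ht))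

lemma MeasureTheory.integral_pos_of_forall_pos {α : Type*} [MeasurableSpace α] {μ : Measure α}
    [NeZero μ] {f : α → ℝ} (hf : ∀ x, 0 < f x) (hfi : Integrable f μ) : 0 < ∫ x, f x ∂μ := by
  rw [integral_pos_iff_support_of_nonneg (fun x => (hf x).le) hfi,
    Function.support_eq_univ fun x => (hf x).ne']
  exact Measure.measure_univ_pos.mpr (NeZero.ne μ)

section ExpFamily

variable {Y : Type*} {h κ : Y → ℝ} {J : ℝ → ℝ} {θ θ₁ θ₂ : ℝ}

noncomputable def expFamilyDensity (h κ : Y → ℝ) (J : ℝ → ℝ) (θ : ℝ) (y : Y) : ℝ :=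
  h y * exp (θ * κ y - J θ)

lemma expFamilyDensity_pos (hh : ∀ y, 0 < h y) (θ : ℝ) (y : Y) :
    0 < expFamilyDensity h κ J θ y :=
  mul_pos (hh y) (exp_pos _)

lemma expFamilyDensity_eq_mul_exp (θ : ℝ) (y : Y) :
    expFamilyDensity h κ J θ y = h y * exp (θ * κ y) * exp (-J θ) := by
  rw [expFamilyDensity, mul_assoc, ← exp_add, sub_eq_add_neg]

lemma expFamilyDensity_mul_log_div (hh : ∀ y, 0 < h y) (θ₁ θ₂ : ℝ) (y : Y) :
    expFamilyDensity h κ J θ₁ y * log (expFamilyDensity h κ J θ₁ y / expFamilyDensity h κ J θ₂ y)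
      = (θ₁ - θ₂) * (κ y * expFamilyDensity h κ J θ₁ y)
        - (J θ₁ - J θ₂) * expFamilyDensity h κ J θ₁ y := by
  rw [expFamilyDensity, expFamilyDensity, mul_div_mul_left _ _ (hh y).ne', ← exp_sub, log_exp]
  ring

variable [MeasurableSpace Y] {μ : Measure Y}

structure IsNaturalParam (μ : Measure Y) (h κ : Y → ℝ) (J : ℝ → ℝ) (θ : ℝ) : Prop where
  integrable_exp : Integrable (fun y => h y * exp (θ * κ y)) μ
  eq_log_integral : J θ = log (∫ y, h y * exp (θ * κ y) ∂μ)
  integrable_mul : Integrable (fun y => κ y * expFamilyDensity h κ J θ y) μ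

namespace IsNaturalParam

lemma integrable (hθ : IsNaturalParam μ h κ J θ) : Integrable (expFamilyDensity h κ J θ) μ := by
  simp_rw [funext (expFamilyDensity_eq_mul_exp (h := h) (κ := κ) (J := J) θ)]
  exact hθ.integrable_exp.mul_const _

lemma integral_expFamilyDensity [NeZero μ] (hh : ∀ y, 0 < h y)
    (hθ : IsNaturalParam μ h κ J θ) : ∫ y, expFamilyDensity h κ J θ y ∂μ = 1 := by
  have hZ : 0 < ∫ y, h y * exp (θ * κ y) ∂μ :=
    integral_pos_of_forall_pos (fun y => mul_pos (hh y) (exp_pos _)) hθ.integrable_exp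
  simp_rw [expFamilyDensity_eq_mul_exp, integral_mul_const, hθ.eq_log_integral, exp_neg,
    exp_log hZ]
  exact mul_inv_cancel₀ hZ.ne'

lemma integral_mul_log_expFamilyDensity_div [NeZero μ] (hh : ∀ y, 0 < h y)
    (hθ₁ : IsNaturalParam μ h κ J θ₁) (θ₂ : ℝ) :
    ∫ y, expFamilyDensity h κ J θ₁ y *
        log (expFamilyDensity h κ J θ₁ y / expFamilyDensity h κ J θ₂ y) ∂μ
      = (θ₁ - θ₂) * ∫ y, κ y * expFamilyDensity h κ J θ₁ y ∂μ - (J θ₁ - J θ₂) := by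
  simp_rw [expFamilyDensity_mul_log_div hh]
  rw [integral_sub (hθ₁.integrable_mul.const_mul _) (hθ₁.integrable.const_mul _),
    integral_const_mul, integral_const_mul, hθ₁.integral_expFamilyDensity hh, mul_one]

lemma integral_mul_log_expFamilyDensity_div_nonneg [NeZero μ] (hh : ∀ y, 0 < h y)
    (hθ₁ : IsNaturalParam μ h κ J θ₁) (hθ₂ : IsNaturalParam μ h κ J θ₂) :
    0 ≤ ∫ y, expFamilyDensity h κ J θ₁ y *
        log (expFamilyDensity h κ J θ₁ y / expFamilyDensity h κ J θ₂ y) ∂μ := by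
  have hle : ∀ y, expFamilyDensity h κ J θ₁ y - expFamilyDensity h κ J θ₂ y ≤
      expFamilyDensity h κ J θ₁ y *
        log (expFamilyDensity h κ J θ₁ y / expFamilyDensity h κ J θ₂ y) := by
    intro y
    have hp₁ := expFamilyDensity_pos (κ := κ) (J := J) hh θ₁ y
    have hp₂ := expFamilyDensity_pos (κ := κ) (J := J) hh θ₂ y
    have := mul_le_mul_of_nonneg_left (one_sub_inv_le_log_of_pos (div_pos hp₁ hp₂)) hp₁.le
    rwa [inv_div, mul_sub, mul_one, mul_div_cancel₀ _ hp₁.ne'] at this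
  have hint : Integrable (fun y => expFamilyDensity h κ J θ₁ y *
      log (expFamilyDensity h κ J θ₁ y / expFamilyDensity h κ J θ₂ y)) μ := by
    simp_rw [expFamilyDensity_mul_log_div hh]
    exact (hθ₁.integrable_mul.const_mul _).sub (hθ₁.integrable.const_mul _)
  calc (0 : ℝ) = ∫ y, (expFamilyDensity h κ J θ₁ y - expFamilyDensity h κ J θ₂ y) ∂μ := by
        rw [integral_sub hθ₁.integrable hθ₂.integrable, hθ₁.integral_expFamilyDensity hh,
          hθ₂.integral_expFamilyDensity hh, sub_self]
    _ ≤ _ := integral_mono (hθ₁.integrable.sub hθ₂.integrable) hint hle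

end IsNaturalParam

lemma integral_mul_expFamilyDensity_eq_deriv [NeZero μ] (hh : ∀ y, 0 < h y) {U : Set ℝ}
    (hU : U ∈ 𝓝 θ) (hpar : ∀ θ' ∈ U, IsNaturalParam μ h κ J θ') (hJ : DifferentiableAt ℝ J θ) :
    ∫ y, κ y * expFamilyDensity h κ J θ y ∂μ = deriv J θ := by
  set m := ∫ y, κ y * expFamilyDensity h κ J θ y ∂μ
  have hθ := hpar θ (mem_of_mem_nhds hU)
  have hmin : IsLocalMin (fun θ' => (θ - θ') * m - (J θ - J θ')) θ := by
    filter_upwards [hU] with θ' hθ'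
    rw [sub_self, zero_mul, sub_self, sub_self, ← hθ.integral_mul_log_expFamilyDensity_div hh]
    exact hθ.integral_mul_log_expFamilyDensity_div_nonneg hh (hpar θ' hθ')
  have hderiv : HasDerivAt (fun θ' => (θ - θ') * m - (J θ - J θ')) (-m + deriv J θ) θ :=
    ((((hasDerivAt_id' θ).const_sub θ).mul_const m).sub
      (hJ.hasDerivAt.const_sub (J θ))).congr_deriv (by ring)
  linarith [hmin.hasDerivAt_eq_zero hderiv]

lemma integral_mul_log_expFamilyDensity_div_le [NeZero μ] (hh : ∀ y, 0 < h y) {U K : Set ℝ}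
    {L : ℝ} (hU : IsOpen U) (hK : Convex ℝ K) (hKU : K ⊆ U)
    (hpar : ∀ θ ∈ U, IsNaturalParam μ h κ J θ) (hJ : ContDiffOn ℝ 2 J U)
    (hL : ∀ θ ∈ K, deriv (deriv J) θ ≤ L) (hθ₁ : θ₁ ∈ K) (hθ₂ : θ₂ ∈ K) :
    ∫ y, expFamilyDensity h κ J θ₁ y *
        log (expFamilyDensity h κ J θ₁ y / expFamilyDensity h κ J θ₂ y) ∂μ
      ≤ L / 2 * (θ₂ - θ₁) ^ 2 := by
  have hJK : ∀ θ ∈ K, ContDiffAt ℝ 2 J θ := fun θ hθ => hJ.contDiffAt (hU.mem_nhds (hKU hθ))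
  rw [(hpar θ₁ (hKU hθ₁)).integral_mul_log_expFamilyDensity_div hh,
    integral_mul_expFamilyDensity_eq_deriv hh (hU.mem_nhds (hKU hθ₁)) hpar
      ((hJK θ₁ hθ₁).differentiableAt (by norm_num))]
  linarith [hK.sub_sub_mul_deriv_le_of_deriv_deriv_le hJK hL hθ₁ hθ₂]

end ExpFamily

/-- For latent functions `f₁, f₂ : X → ℝ` taking values in a bounded set `Ω`,
`ζ` continuously differentiable with bounded derivative, conditional densities of a
one-parameter canonical exponential family with canonical parameters `θᵢ = ζ ∘ fᵢ` and
log-partition function `J` (C², with `J''` bounded on `ζ(Ω)`), there exists a constant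
`C(Ω)` such that the joint KL divergence satisfies `KL(π_{f₁}; π_{f₂}) ≤ C(Ω) ‖f₁ - f₂‖_∞²`. -/
theorem kl_bound_by_sup_norm
    {X : Type*} [MeasurableSpace X] (ν : Measure X) [IsProbabilityMeasure ν]
    {Y : Type*} [MeasurableSpace Y] (μ : Measure Y)
    (h κ : Y → ℝ) (hh : ∀ y, 0 < h y)
    (Ω : Set ℝ) (hΩ : Bornology.IsBounded Ω)
    (ζ : ℝ → ℝ) (hζ : ContDiff ℝ 1 ζ) (Bζ : ℝ) (hζ' : ∀ u, |deriv ζ u| ≤ Bζ)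
    (a b : ℝ) (J : ℝ → ℝ)
    (hab : convexHull ℝ (ζ '' Ω) ⊆ Set.Ioo a b)
    (hint : ∀ θ ∈ Set.Ioo a b, Integrable (fun y => h y * exp (θ * κ y)) μ)
    (hJ : ∀ θ ∈ Set.Ioo a b, J θ = log (∫ y, h y * exp (θ * κ y) ∂μ))
    (hJC2 : ContDiffOn ℝ 2 J (Set.Ioo a b))
    (LJ : ℝ) (hJ2 : ∀ u ∈ convexHull ℝ (ζ '' Ω), deriv (deriv J) u ≤ LJ)
    (hκint : ∀ θ ∈ Set.Ioo a b,
      Integrable (fun y => κ y * (h y * exp (θ * κ y - J θ))) μ) :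
    ∃ C : ℝ, 0 < C ∧
      ∀ f₁ f₂ : X → ℝ, Measurable f₁ → Measurable f₂ →
        (∀ x, f₁ x ∈ Ω) → (∀ x, f₂ x ∈ Ω) →
        (∫ x, (∫ y, (h y * exp (ζ (f₁ x) * κ y - J (ζ (f₁ x)))) *
              log ((h y * exp (ζ (f₁ x) * κ y - J (ζ (f₁ x)))) /
                   (h y * exp (ζ (f₂ x) * κ y - J (ζ (f₂ x))))) ∂μ) ∂ν) ≤
          C * (⨆ x, |f₁ x - f₂ x|) ^ 2 := by
  rcases eq_zero_or_neZero μ with rfl | _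
  · refine ⟨1, one_pos, fun f₁ f₂ _ _ _ _ => ?_⟩
    simp only [integral_zero_measure, integral_zero]
    positivity
  have hpar : ∀ θ ∈ Ioo a b, IsNaturalParam μ h κ J θ :=
    fun θ hθ => ⟨hint θ hθ, hJ θ hθ, hκint θ hθ⟩
  have hBζ : 0 ≤ Bζ := (abs_nonneg _).trans (hζ' 0)
  have hζlip : ∀ u v, |ζ u - ζ v| ≤ Bζ * |u - v| := fun u v =>
    convex_univ.norm_image_sub_le_of_norm_deriv_le
      (fun t _ => (hζ.differentiable one_ne_zero).differentiableAt) (fun t _ => hζ' t)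
      (mem_univ v) (mem_univ u)
  refine ⟨max LJ 0 / 2 * Bζ ^ 2 + 1, by positivity, fun f₁ f₂ _ _ hf₁ hf₂ => ?_⟩
  set S := ⨆ x, |f₁ x - f₂ x|
  obtain ⟨R, hR⟩ := isBounded_iff_forall_norm_le.mp hΩ
  have hS : ∀ x, |f₁ x - f₂ x| ≤ S := le_ciSup ⟨R + R, forall_mem_range.mpr fun x =>
    (abs_sub _ _).trans (add_le_add (hR _ (hf₁ x)) (hR _ (hf₂ x)))⟩
  have hζmem : ∀ f : X → ℝ, (∀ x, f x ∈ Ω) → ∀ x, ζ (f x) ∈ convexHull ℝ (ζ '' Ω) :=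
    fun f hf x => subset_convexHull ℝ _ (mem_image_of_mem ζ (hf x))
  have hKL : ∀ x, ∫ y, expFamilyDensity h κ J (ζ (f₁ x)) y *
      log (expFamilyDensity h κ J (ζ (f₁ x)) y / expFamilyDensity h κ J (ζ (f₂ x)) y) ∂μ
        ≤ (max LJ 0 / 2 * Bζ ^ 2 + 1) * S ^ 2 := fun x => calc
    _ ≤ max LJ 0 / 2 * (ζ (f₂ x) - ζ (f₁ x)) ^ 2 :=
      integral_mul_log_expFamilyDensity_div_le hh isOpen_Ioo (convex_convexHull ℝ _) hab hpar
        hJC2 (fun u hu => (hJ2 u hu).trans (le_max_left _ _)) (hζmem f₁ hf₁ x) (hζmem f₂ hf₂ x)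
    _ ≤ max LJ 0 / 2 * (Bζ * S) ^ 2 := by
      gcongr max LJ 0 / 2 * ?_
      rw [← sq_abs]
      gcongr
      exact (hζlip _ _).trans (mul_le_mul_of_nonneg_left (abs_sub_comm (f₁ x) _ ▸ hS x) hBζ)
    _ ≤ (max LJ 0 / 2 * Bζ ^ 2 + 1) * S ^ 2 := by nlinarith [sq_nonneg S]
  calc _ ≤ ∫ _, (max LJ 0 / 2 * Bζ ^ 2 + 1) * S ^ 2 ∂ν :=
        integral_mono_of_nonneg (ae_of_all _ fun x =>
          (hpar _ (hab (hζmem f₁ hf₁ x))).integral_mul_log_expFamilyDensity_div_nonneg hh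
            (hpar _ (hab (hζmem f₂ hf₂ x))))
          (integrable_const _) (ae_of_all _ hKL)
    _ = _ := by simp
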